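/- arXiv:2008.00577 — 4 statements merged into one kernel-verified Lean document; each statement's English description precedes it below -/
import Mathlib

section
/- The elements X - α₀ and X - α₁ of A_α are group-like for the comultiplication Δ: namely Δ(X - α₀) = (X - α₀) ⊗ (X - α₀) and Δ(X - α₁) = (X - α₁) ⊗ (X - α₁) in A_α ⊗_{R_α} A_α. -/
open Polynomial TensorProduct

noncomputable section

/-- `R_α = ℤ[α₀, α₁]`, the polynomial ring in two variables over `ℤ`. -/
abbrev Rα : Type := MvPolynomial (Fin 2) ℤ

/-- `α₀ ∈ R_α`. -/
abbrev α0 : Rα := MvPolynomial.X 0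

/-- `α₁ ∈ R_α`. -/
abbrev α1 : Rα := MvPolynomial.X 1

/-- `A_α = R_α[X]/((X - α₀)(X - α₁))`. -/
abbrev Aα : Type := AdjoinRoot ((X - C α0) * (X - C α1))

/-- `X`, the image of the variable in `A_α`. -/
abbrev Xα : Aα := AdjoinRoot.root ((X - C α0) * (X - C α1))

/-- The structure map `R_α → A_α`. -/
abbrev aα : Rα → Aα := algebraMap Rα Aα

/-- Auxiliary abstract form of the group-like computation. -/
lemma aux_grouplike {R A : Type*} [CommRing R] [CommRing A] [Algebra R A]
    (x : A) (a b : R) (D : A →ₗ[R] A ⊗[R] A)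
    (h1 : D 1 = (x - a • 1) ⊗ₜ[R] 1 + 1 ⊗ₜ[R] (x - b • 1))
    (hX : D x = x ⊗ₜ[R] x - (a * b) • ((1 : A) ⊗ₜ[R] (1 : A))) :
    D (x - a • 1) = (x - a • 1) ⊗ₜ[R] (x - a • 1) ∧
    D (x - b • 1) = (x - b • 1) ⊗ₜ[R] (x - b • 1) := by
  constructor <;>
  · rw [map_sub, map_smul, h1, hX]
    simp only [TensorProduct.tmul_sub, TensorProduct.sub_tmul, ← smul_tmul',
      TensorProduct.tmul_smul, smul_sub, smul_add, smul_smul]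
    module

/-- If `Δ : A_α → A_α ⊗ A_α` is the `R_α`-linear comultiplication, determined by
`Δ(1) = (X - α₀) ⊗ 1 + 1 ⊗ (X - α₁)` and `Δ(X) = X ⊗ X - α₀α₁ (1 ⊗ 1)`, then
`X - α₀` and `X - α₁` are group-like:
`Δ(X - α₀) = (X - α₀) ⊗ (X - α₀)` and `Δ(X - α₁) = (X - α₁) ⊗ (X - α₁)`. -/
theorem stmt2 (Δ : Aα →ₗ[Rα] Aα ⊗[Rα] Aα)
    (hΔ1 : Δ 1 = (Xα - aα α0) ⊗ₜ[Rα] 1 + 1 ⊗ₜ[Rα] (Xα - aα α1))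
    (hΔX : Δ Xα = Xα ⊗ₜ[Rα] Xα - (α0 * α1) • ((1 : Aα) ⊗ₜ[Rα] (1 : Aα))) :
    Δ (Xα - aα α0) = (Xα - aα α0) ⊗ₜ[Rα] (Xα - aα α0) ∧
    Δ (Xα - aα α1) = (Xα - aα α1) ⊗ₜ[Rα] (Xα - aα α1) := by
  have h : ∀ r : Rα, aα r = r • (1 : Aα) := fun r => Algebra.algebraMap_eq_smul_one r
  simp only [h] at hΔ1 hΔX ⊢
  exact aux_grouplike Xα α0 α1 Δ hΔ1 hΔX
end
end

section
/- The trace ε_α is a counit for the comultiplication Δ: for every a ∈ A_α, applying ε_α ⊗ id to Δ(a) and identifying R_α ⊗_{R_α} A_α with A_α gives back a, and likewise applying id ⊗ ε_α to Δ(a) and identifying A_α ⊗_{R_α} R_α with A_α gives back a. -/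
open Polynomial TensorProduct

noncomputable section

theorem AdjoinRoot.span_one_root_eq_top {R : Type*} [CommRing R] {f : R[X]} (hf : f.Monic)
    (hdeg : f.natDegree = 2) : Submodule.span R {1, root f} = ⊤ := by
  rw [eq_top_iff, ← (powerBasis' hf).basis.span_eq, Submodule.span_le]
  rintro _ ⟨⟨i, hi⟩, rfl⟩
  rw [PowerBasis.basis_eq_pow, powerBasis'_gen]
  replace hi : i < 2 := by simpa [hdeg] using hi
  interval_cases i <;> exact Submodule.subset_span (by simp)

section Counit

variable {R A : Type*} [CommRing R] [Ring A] [Algebra R A]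

theorem LinearMap.map_algebraMap_eq_zero {ε : A →ₗ[R] R} (hε1 : ε 1 = 0) (r : R) :
    ε (algebraMap R A r) = 0 := by
  rw [Algebra.algebraMap_eq_smul_one, map_smul, hε1, smul_zero]

variable {x : A} (hx : Submodule.span R {1, x} = ⊤) {ε : A →ₗ[R] R} (hε1 : ε 1 = 0)
  (hεx : ε x = 1) {Δ : A →ₗ[R] A ⊗[R] A} {a₀ a₁ c : R}
  (hΔ1 : Δ 1 = (x - algebraMap R A a₀) ⊗ₜ 1 + 1 ⊗ₜ (x - algebraMap R A a₁))
  (hΔx : Δ x = x ⊗ₜ x - c • ((1 : A) ⊗ₜ (1 : A)))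
include hx hε1 hεx hΔ1 hΔx

theorem lid_comp_rTensor_comp_eq_id_of_span_one_eq_top :
    (TensorProduct.lid R A).toLinearMap ∘ₗ LinearMap.rTensor A ε ∘ₗ Δ = LinearMap.id := by
  refine LinearMap.ext_on hx ?_
  rintro _ (rfl | rfl)
  · simp [hΔ1, hεx, hε1, LinearMap.map_algebraMap_eq_zero hε1]
  · simp [hΔx, hεx, hε1]

theorem rid_comp_lTensor_comp_eq_id_of_span_one_eq_top :
    (TensorProduct.rid R A).toLinearMap ∘ₗ LinearMap.lTensor A ε ∘ₗ Δ = LinearMap.id := by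
  refine LinearMap.ext_on hx ?_
  rintro _ (rfl | rfl)
  · simp [hΔ1, hεx, hε1, LinearMap.map_algebraMap_eq_zero hε1]
  · simp [hΔx, hεx, hε1]

end Counit

/-- The trace `ε_α` (determined by `ε_α(1) = 0`, `ε_α(X) = 1`) is a counit for the
comultiplication `Δ` (determined by `Δ(1) = (X - α₀) ⊗ 1 + 1 ⊗ (X - α₁)` and
`Δ(X) = X ⊗ X - α₀α₁ (1 ⊗ 1)`): for every `a ∈ A_α`, `(ε_α ⊗ id)(Δ a) = a` under
the identification `R_α ⊗ A_α ≅ A_α`, and `(id ⊗ ε_α)(Δ a) = a` under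
the identification `A_α ⊗ R_α ≅ A_α`. -/
theorem stmt3 (ε : Aα →ₗ[Rα] Rα) (hε1 : ε 1 = 0) (hεX : ε Xα = 1)
    (Δ : Aα →ₗ[Rα] Aα ⊗[Rα] Aα)
    (hΔ1 : Δ 1 = (Xα - aα α0) ⊗ₜ[Rα] 1 + 1 ⊗ₜ[Rα] (Xα - aα α1))
    (hΔX : Δ Xα = Xα ⊗ₜ[Rα] Xα - (α0 * α1) • ((1 : Aα) ⊗ₜ[Rα] (1 : Aα))) :
    ∀ a : Aα,
      (TensorProduct.lid Rα Aα) ((LinearMap.rTensor Aα ε) (Δ a)) = a ∧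
      (TensorProduct.rid Rα Aα) ((LinearMap.lTensor Aα ε) (Δ a)) = a := by
  have hmonic : ((X - C α0) * (X - C α1)).Monic := (monic_X_sub_C α0).mul (monic_X_sub_C α1)
  have hspan : Submodule.span Rα {1, Xα} = ⊤ :=
    AdjoinRoot.span_one_root_eq_top hmonic <| by
      rw [(monic_X_sub_C α0).natDegree_mul (monic_X_sub_C α1), natDegree_X_sub_C,
        natDegree_X_sub_C]
  intro a
  exact ⟨LinearMap.congr_fun
      (lid_comp_rTensor_comp_eq_id_of_span_one_eq_top hspan hε1 hεX hΔ1 hΔX) a,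
    LinearMap.congr_fun
      (rid_comp_lTensor_comp_eq_id_of_span_one_eq_top hspan hε1 hεX hΔ1 hΔX) a⟩
end
end

section
/- Let μ_X : A_α → A_α be multiplication by X, let g : A_α → A_α be the R_α-linear map determined on the basis {1, X − α₀} by g(1) = α₀·1 and g(X − α₀) = α₁·(X − α₀), and let N : A_α → A_α be the R_α-linear map determined by N(1) = X − α₀ and N(X − α₀) = 0. Then μ_X = g + N, the map g satisfies the quadratic relation g² − (α₀ + α₁)g + α₀α₁·id = 0 (equivalently (g − α₀·id)∘(g − α₁·id) = 0), and g ≠ 0. (Thus, in contrast with the U(2)-equivariant setting, the annular-degree-preserving part of the dot action on an essential circle is a nonzero endomorphism satisfying the defining quadratic relation of A_α.) -/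
open Polynomial

noncomputable section

lemma fmonic : ((X - C α0) * (X - C α1)).Monic := (monic_X_sub_C _).mul (monic_X_sub_C _)

lemma hroot : (Xα - aα α0) * (Xα - aα α1) = 0 := by
  have h : AdjoinRoot.mk ((X - C α0) * (X - C α1)) ((X - C α0) * (X - C α1)) = 0 :=
    AdjoinRoot.mk_self
  rw [map_mul, map_sub, map_sub, AdjoinRoot.mk_X, AdjoinRoot.mk_C, AdjoinRoot.mk_C] at h
  exact h

def pb : PowerBasis Rα Aα := AdjoinRoot.powerBasis' fmonic

lemma pbdim : pb.dim = 2 := by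
  simp [pb, AdjoinRoot.powerBasis', (monic_X_sub_C α0).natDegree_mul (monic_X_sub_C α1)]

lemma lext {f h : Aα →ₗ[Rα] Aα} (h1 : f 1 = h 1) (h2 : f Xα = h Xα) : f = h := by
  refine pb.basis.ext fun i => ?_
  have hb : pb.basis i = Xα ^ (i : ℕ) := by rw [PowerBasis.coe_basis]; rfl
  have hi : (i : ℕ) < 2 := by have := i.2; have := pbdim; omega
  have : (i : ℕ) = 0 ∨ (i : ℕ) = 1 := by omega
  rcases this with h0 | h0 <;> rw [hb, h0] <;> simpa

/-- Let `μ_X` be multiplication by `X`, let `g` be the `R_α`-linear map with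
`g(1) = α₀·1` and `g(X − α₀) = α₁·(X − α₀)` (on the basis `{1, X − α₀}`), and let `N`
be the `R_α`-linear map with `N(1) = X − α₀` and `N(X − α₀) = 0`. Then `μ_X = g + N`,
`g² − (α₀ + α₁)g + α₀α₁·id = 0` (equivalently `(g − α₀·id)∘(g − α₁·id) = 0`), and
`g ≠ 0`. -/
theorem stmt11 (g N : Aα →ₗ[Rα] Aα)
    (hg1 : g 1 = α0 • (1 : Aα)) (hg2 : g (Xα - aα α0) = α1 • (Xα - aα α0))
    (hN1 : N 1 = Xα - aα α0) (hN2 : N (Xα - aα α0) = 0) :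
    LinearMap.mulLeft Rα Xα = g + N ∧
    g ∘ₗ g - (α0 + α1) • g + (α0 * α1) • (LinearMap.id : Aα →ₗ[Rα] Aα) = 0 ∧
    (g - α0 • (LinearMap.id : Aα →ₗ[Rα] Aα)) ∘ₗ
      (g - α1 • (LinearMap.id : Aα →ₗ[Rα] Aα)) = 0 ∧
    g ≠ 0 := by
  have halg : α0 • (1 : Aα) = aα α0 := by rw [Algebra.smul_def, mul_one]
  have hga : g (aα α0) = (α0 * α0) • (1 : Aα) := by
    rw [← halg, map_smul, hg1, smul_smul]
  have hna : N (aα α0) = α0 • (Xα - aα α0) := by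
    conv_lhs => rw [← halg]
    rw [map_smul, hN1]
  have hx : Xα = (Xα - aα α0) + aα α0 := by ring
  have hgX : g Xα = α1 • (Xα - aα α0) + (α0 * α0) • (1 : Aα) := by
    conv_lhs => rw [hx]
    rw [map_add, hg2, hga]
  have hNX : N Xα = α0 • (Xα - aα α0) := by
    conv_lhs => rw [hx]
    rw [map_add, hN2, hna, zero_add]
  refine ⟨?_, ?_, ?_, ?_⟩
  · refine lext ?_ ?_ <;>
      simp only [LinearMap.mulLeft_apply, LinearMap.add_apply, hg1, hN1, hgX, hNX, mul_one,
        Algebra.smul_def, map_add, map_mul]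
    · ring
    · linear_combination hroot
  · refine lext ?_ ?_ <;>
      simp only [LinearMap.add_apply, LinearMap.sub_apply, LinearMap.comp_apply,
        LinearMap.smul_apply, LinearMap.id_apply, LinearMap.zero_apply, map_add, map_sub,
        map_smul, hg1, hgX, hg2, hga, smul_smul] <;>
      simp only [Algebra.smul_def, mul_one, map_add, map_mul] <;> ring
  · refine lext ?_ ?_ <;>
      simp only [LinearMap.sub_apply, LinearMap.comp_apply, LinearMap.smul_apply,
        LinearMap.id_apply, LinearMap.zero_apply, map_add, map_sub, map_smul,
        hg1, hgX, hg2, hga, smul_smul] <;>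
      simp only [Algebra.smul_def, mul_one, map_add, map_mul] <;> ring
  · intro h
    have h1 : aα α0 = 0 := by
      have := hg1
      rw [h] at this
      simpa [halg] using this.symm
    have hb : (1 : Aα) = pb.basis ⟨0, by rw [pbdim]; norm_num⟩ := by
      rw [PowerBasis.coe_basis]; simp
    have h2 : aα α0 = α0 • pb.basis ⟨0, by rw [pbdim]; norm_num⟩ := by
      rw [← hb, halg]
    rw [h2] at h1
    have h3 := congrArg pb.basis.repr h1
    rw [map_smul, Module.Basis.repr_self, map_zero] at h3
    have h4 := congrFun (congrArg DFunLike.coe h3) ⟨0, by rw [pbdim]; norm_num⟩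
    simp at h4
end
end

section
/- With respect to the idempotent basis, the comultiplication of A_{αD} is diagonal: Δ(e₀) = (α₁ − α₀)·(e₀ ⊗ e₀) and Δ(e₁) = (α₀ − α₁)·(e₁ ⊗ e₁) in A_{αD} ⊗_{R_{αD}} A_{αD}, where e₀ = (α₁ − α₀)⁻¹·(X − α₀) and e₁ = (α₀ − α₁)⁻¹·(X − α₁). -/
open Polynomial TensorProduct

noncomputable section

/-- The discriminant `D = (α₀ − α₁)² ∈ R_α`. -/
abbrev Dd : Rα := (α0 - α1) ^ 2

/-- `R_{αD}`, the localization of `R_α` away from `D` (so `α₀ − α₁` is invertible). -/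
abbrev RαD : Type := Localization.Away Dd

/-- The image of `α₀` in `R_{αD}`. -/
abbrev β0 : RαD := algebraMap Rα RαD α0

/-- The image of `α₁` in `R_{αD}`. -/
abbrev β1 : RαD := algebraMap Rα RαD α1

/-- `A_{αD} = R_{αD}[X]/((X − α₀)(X − α₁))`. -/
abbrev AαD : Type := AdjoinRoot ((X - C β0) * (X - C β1))

/-- `X`, the image of the variable in `A_{αD}`. -/
abbrev XαD : AαD := AdjoinRoot.root ((X - C β0) * (X - C β1))

/-- `e₀ = (α₁ − α₀)⁻¹ · (X − α₀) ∈ A_{αD}`. -/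
def e0 : AαD := Ring.inverse (β1 - β0) • (XαD - algebraMap RαD AαD β0)

/-- `e₁ = (α₀ − α₁)⁻¹ · (X − α₁) ∈ A_{αD}`. -/
def e1 : AαD := Ring.inverse (β0 - β1) • (XαD - algebraMap RαD AαD β1)

set_option maxHeartbeats 1000000 in
private lemma auxKey0 {R A : Type*} [CommRing R] [CommRing A] [Algebra R A]
    (x : A) (b c : R) :
    x ⊗ₜ[R] x - (b * c) • ((1 : A) ⊗ₜ[R] (1 : A))
      - b • ((x - algebraMap R A b) ⊗ₜ[R] 1 + 1 ⊗ₜ[R] (x - algebraMap R A c))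
    = (x - algebraMap R A b) ⊗ₜ[R] (x - algebraMap R A b) := by
  have hm : ∀ p q : A, p ⊗ₜ[R] q = (p ⊗ₜ[R] (1 : A)) * ((1 : A) ⊗ₜ[R] q) := fun p q => by
    rw [Algebra.TensorProduct.tmul_mul_tmul, mul_one, one_mul]
  simp only [sub_tmul, tmul_sub, smul_sub, smul_add]
  rw [hm x x, hm x (algebraMap R A b), hm (algebraMap R A b) x,
    hm (algebraMap R A b) (algebraMap R A b)]
  simp only [← Algebra.TensorProduct.one_def, ← Algebra.TensorProduct.algebraMap_apply,
    ← Algebra.TensorProduct.algebraMap_apply', Algebra.smul_def, map_mul]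
  ring

private lemma auxKey1 {R A : Type*} [CommRing R] [CommRing A] [Algebra R A]
    (x : A) (b c : R) :
    x ⊗ₜ[R] x - (b * c) • ((1 : A) ⊗ₜ[R] (1 : A))
      - c • ((x - algebraMap R A b) ⊗ₜ[R] 1 + 1 ⊗ₜ[R] (x - algebraMap R A c))
    = (x - algebraMap R A c) ⊗ₜ[R] (x - algebraMap R A c) := by
  have hm : ∀ p q : A, p ⊗ₜ[R] q = (p ⊗ₜ[R] (1 : A)) * ((1 : A) ⊗ₜ[R] q) := fun p q => by
    rw [Algebra.TensorProduct.tmul_mul_tmul, mul_one, one_mul]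
  simp only [sub_tmul, tmul_sub, smul_sub, smul_add]
  rw [hm x x, hm x (algebraMap R A c), hm (algebraMap R A c) x,
    hm (algebraMap R A c) (algebraMap R A c)]
  simp only [← Algebra.TensorProduct.one_def, ← Algebra.TensorProduct.algebraMap_apply,
    ← Algebra.TensorProduct.algebraMap_apply', Algebra.smul_def, map_mul]
  ring

private lemma auxPull {R A : Type*} [CommRing R] [CommRing A] [Algebra R A]
    (u v : R) (h : u * v = 1) (s t : A) :
    v • (s ⊗ₜ[R] t) = u • ((v • s) ⊗ₜ[R] (v • t)) := by
  have hv : u * v * v = v := by linear_combination v * h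
  rw [tmul_smul, ← smul_tmul', smul_smul, smul_smul, hv]

private lemma hUnit1 : IsUnit (β0 - β1) := by
  have h : IsUnit (algebraMap Rα RαD Dd) := IsLocalization.Away.algebraMap_isUnit Dd
  rw [map_pow, map_sub, sq] at h
  exact isUnit_of_mul_isUnit_left h

private lemma hUnit0 : IsUnit (β1 - β0) := by
  have h := hUnit1.neg
  rwa [neg_sub] at h

private lemma hInv0 : (β1 - β0) * Ring.inverse (β1 - β0) = 1 :=
  Ring.mul_inverse_cancel _ hUnit0

private lemma hInv1 : (β0 - β1) * Ring.inverse (β0 - β1) = 1 :=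
  Ring.mul_inverse_cancel _ hUnit1

private lemma part0 (Δ : AαD →ₗ[RαD] AαD ⊗[RαD] AαD)
    (hΔ1 : Δ 1 = (XαD - algebraMap RαD AαD β0) ⊗ₜ[RαD] 1
        + 1 ⊗ₜ[RαD] (XαD - algebraMap RαD AαD β1))
    (hΔX : Δ XαD = XαD ⊗ₜ[RαD] XαD - (β0 * β1) • ((1 : AαD) ⊗ₜ[RαD] (1 : AαD))) :
    Δ e0 = (β1 - β0) • (e0 ⊗ₜ[RαD] e0) := by
  rw [e0, map_smul, map_sub, Algebra.algebraMap_eq_smul_one β0, map_smul, hΔX, hΔ1,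
    ← Algebra.algebraMap_eq_smul_one β0, auxKey0 XαD β0 β1]
  exact auxPull (β1 - β0) (Ring.inverse (β1 - β0)) hInv0 _ _

private lemma part1 (Δ : AαD →ₗ[RαD] AαD ⊗[RαD] AαD)
    (hΔ1 : Δ 1 = (XαD - algebraMap RαD AαD β0) ⊗ₜ[RαD] 1
        + 1 ⊗ₜ[RαD] (XαD - algebraMap RαD AαD β1))
    (hΔX : Δ XαD = XαD ⊗ₜ[RαD] XαD - (β0 * β1) • ((1 : AαD) ⊗ₜ[RαD] (1 : AαD))) :
    Δ e1 = (β0 - β1) • (e1 ⊗ₜ[RαD] e1) := by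
  rw [e1, map_smul, map_sub, Algebra.algebraMap_eq_smul_one β1, map_smul, hΔX, hΔ1,
    ← Algebra.algebraMap_eq_smul_one β1, auxKey1 XαD β0 β1]
  exact auxPull (β0 - β1) (Ring.inverse (β0 - β1)) hInv1 _ _

/-- With respect to the idempotent basis, the comultiplication of `A_{αD}` (the
`R_{αD}`-linear map `Δ` with `Δ(1) = (X − α₀) ⊗ 1 + 1 ⊗ (X − α₁)` and
`Δ(X) = X ⊗ X − α₀α₁ (1 ⊗ 1)`) is diagonal:
`Δ(e₀) = (α₁ − α₀)·(e₀ ⊗ e₀)` and `Δ(e₁) = (α₀ − α₁)·(e₁ ⊗ e₁)`. -/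
theorem stmt16 (Δ : AαD →ₗ[RαD] AαD ⊗[RαD] AαD)
    (hΔ1 : Δ 1 = (XαD - algebraMap RαD AαD β0) ⊗ₜ[RαD] 1
        + 1 ⊗ₜ[RαD] (XαD - algebraMap RαD AαD β1))
    (hΔX : Δ XαD = XαD ⊗ₜ[RαD] XαD - (β0 * β1) • ((1 : AαD) ⊗ₜ[RαD] (1 : AαD))) :
    Δ e0 = (β1 - β0) • (e0 ⊗ₜ[RαD] e0) ∧
    Δ e1 = (β0 - β1) • (e1 ⊗ₜ[RαD] e1) :=
  ⟨part0 Δ hΔ1 hΔX, part1 Δ hΔ1 hΔX⟩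
end
end
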